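/- arXiv:2111.04350 — 3 statements merged into one kernel-verified Lean document; each statement's English description precedes it below -/
import Mathlib

section
/- Hardy's inequality: for p ∈ (0,∞), q ∈ [1,∞), and a nonnegative measurable function φ on (0,∞), one has (∫₀^∞ [∫₀^t t^{-1/p} φ(s) ds/s]^q dt/t)^{1/q} ≤ p (∫₀^∞ [s^{-1/p} φ(s)]^q ds/s)^{1/q}. -/
open MeasureTheory ENNReal Set

/-! Write `φ(s)/s = (φ(s) s^{-1/p}) · s^{1/p-1}`. Hölder's inequality against the weight
`s^{1/p-1}`, whose mass on `(0,t)` is `p t^{1/p}`, bounds the `q`-th power of the inner integral by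
`p^{q-1} t^{-1/p} ∫₀^t φ(s)^q s^{(1-q)/p-1} ds`. Integrating against `dt/t` and exchanging the
order of integration, the `t`-integral becomes `∫_s^∞ t^{-1/p-1} dt = p s^{-1/p}`, which turns the
bound into `p^q ∫₀^∞ (s^{-1/p} φ(s))^q ds/s`. -/

lemma lintegral_mul_rpow_le_of_one_le {α : Type*} [MeasurableSpace α] {μ : Measure α}
    {f w : α → ℝ≥0∞} (hf : AEMeasurable f μ) (hw : AEMeasurable w μ) {q : ℝ} (hq : 1 ≤ q) :
    (∫⁻ x, f x * w x ∂μ) ^ q ≤ (∫⁻ x, f x ^ q * w x ∂μ) * (∫⁻ x, w x ∂μ) ^ (q - 1) := by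
  have hq0 : 0 < q := one_pos.trans_le hq
  have hq' : 0 ≤ 1 - 1 / q := sub_nonneg.2 ((div_le_one hq0).2 hq)
  have holder := ENNReal.lintegral_mul_norm_pow_le (f := fun x => f x ^ q * w x)
    ((hf.pow_const q).mul hw) hw (one_div_pos.2 hq0).le hq' (add_sub_cancel _ _)
  have hsplit : ∀ x, (f x ^ q * w x) ^ (1 / q) * w x ^ (1 - 1 / q) = f x * w x := fun x => by
    rw [mul_rpow_of_nonneg _ _ (by positivity), ← rpow_mul, mul_one_div_cancel hq0.ne', rpow_one,
      mul_assoc, ← rpow_add_of_nonneg _ _ (by positivity) hq', add_sub_cancel, rpow_one]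
  simp_rw [hsplit] at holder
  calc (∫⁻ x, f x * w x ∂μ) ^ q
      ≤ ((∫⁻ x, f x ^ q * w x ∂μ) ^ (1 / q) * (∫⁻ x, w x ∂μ) ^ (1 - 1 / q)) ^ q :=
        rpow_le_rpow holder hq0.le
    _ = (∫⁻ x, f x ^ q * w x ∂μ) * (∫⁻ x, w x ∂μ) ^ (q - 1) := by
        rw [mul_rpow_of_nonneg _ _ hq0.le, ← rpow_mul, ← rpow_mul, one_div_mul_cancel hq0.ne',
          rpow_one, sub_mul, one_mul, one_div_mul_cancel hq0.ne']

lemma ofReal_rpow_mul_ofReal_rpow {s : ℝ} (hs : 0 < s) (a b : ℝ) :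
    ENNReal.ofReal (s ^ a) * ENNReal.ofReal (s ^ b) = ENNReal.ofReal (s ^ (a + b)) := by
  rw [← ofReal_mul (Real.rpow_nonneg hs.le _), ← Real.rpow_add hs]

lemma ofReal_rpow_rpow {s : ℝ} (hs : 0 < s) (a q : ℝ) :
    ENNReal.ofReal (s ^ a) ^ q = ENNReal.ofReal (s ^ (a * q)) := by
  rw [ofReal_rpow_of_pos (Real.rpow_pos_of_pos hs a), ← Real.rpow_mul hs.le]

lemma lintegral_Ioo_zero_rpow {a t : ℝ} (ha : -1 < a) (ht : 0 < t) :
    ∫⁻ s in Ioo 0 t, ENNReal.ofReal (s ^ a) = ENNReal.ofReal (t ^ (a + 1) / (a + 1)) := by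
  rw [← ofReal_integral_eq_lintegral_ofReal
      ((intervalIntegral.integrableOn_Ioo_rpow_iff ht).2 ha)
      ((ae_restrict_mem measurableSet_Ioo).mono fun s hs => Real.rpow_nonneg hs.1.le a),
    ← integral_Ioc_eq_integral_Ioo, ← intervalIntegral.integral_of_le ht.le,
    integral_rpow (Or.inl ha), Real.zero_rpow (by linarith), sub_zero]

lemma lintegral_Ioi_rpow {a s : ℝ} (ha : a < -1) (hs : 0 < s) :
    ∫⁻ t in Ioi s, ENNReal.ofReal (t ^ a) = ENNReal.ofReal (-s ^ (a + 1) / (a + 1)) := by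
  rw [← ofReal_integral_eq_lintegral_ofReal (integrableOn_Ioi_rpow_of_lt ha hs)
      ((ae_restrict_mem measurableSet_Ioi).mono fun t ht => Real.rpow_nonneg (hs.trans ht).le a),
    integral_Ioi_rpow_of_lt ha hs]

lemma lintegral_Ioi_lintegral_Ioo_swap {μ : Measure ℝ} [SFinite μ] (a : ℝ)
    {H : ℝ → ℝ → ℝ≥0∞} (hH : Measurable (Function.uncurry H)) :
    ∫⁻ t in Ioi a, ∫⁻ s in Ioo a t, H s t ∂μ ∂μ = ∫⁻ s in Ioi a, ∫⁻ t in Ioi s, H s t ∂μ ∂μ := by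
  set K : ℝ → ℝ → ℝ≥0∞ := fun s t => if s < t then H s t else 0
  have hK : Measurable (Function.uncurry K) :=
    Measurable.ite (measurableSet_lt measurable_fst measurable_snd) hH measurable_const
  have hIoo : ∀ t, ∫⁻ s in Ioo a t, H s t ∂μ = ∫⁻ s in Ioi a, K s t ∂μ := fun t => by
    rw [← Iio_inter_Ioi, ← setLIntegral_indicator measurableSet_Iio]
    rfl
  have hIoi : EqOn (fun s => ∫⁻ t in Ioi s, H s t ∂μ) (fun s => ∫⁻ t in Ioi a, K s t ∂μ)
      (Ioi a) := fun s hs => by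
    simp only
    rw [← inter_eq_left.2 (Ioi_subset_Ioi hs.le), ← setLIntegral_indicator measurableSet_Ioi]
    rfl
  simp_rw [hIoo]
  rw [setLIntegral_congr_fun measurableSet_Ioi hIoi]
  exact lintegral_lintegral_swap (hK.comp measurable_swap).aemeasurable

lemma lintegral_Ioi_rpow_mul_lintegral_Ioo {a : ℝ} (ha : 0 < a) {F : ℝ → ℝ≥0∞}
    (hF : Measurable F) :
    ∫⁻ t in Ioi 0, ENNReal.ofReal (t ^ (-a - 1)) * ∫⁻ s in Ioo 0 t, F s =
      ENNReal.ofReal (1 / a) * ∫⁻ s in Ioi 0, ENNReal.ofReal (s ^ (-a)) * F s := by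
  have htail : EqOn (fun s => ∫⁻ t in Ioi s, ENNReal.ofReal (t ^ (-a - 1)) * F s)
      (fun s => ENNReal.ofReal (1 / a) * (ENNReal.ofReal (s ^ (-a)) * F s)) (Ioi 0) :=
    fun s hs => by
      simp only
      rw [lintegral_mul_const _ (by fun_prop), lintegral_Ioi_rpow (by linarith) hs,
        sub_add_cancel, neg_div_neg_eq, div_eq_mul_one_div, mul_comm _ (1 / a),
        ofReal_mul (one_div_pos.2 ha).le, mul_assoc]
  simp_rw [← lintegral_const_mul' _ _ ofReal_ne_top]
  rw [lintegral_Ioi_lintegral_Ioo_swap 0 (by fun_prop),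
    setLIntegral_congr_fun measurableSet_Ioi htail, lintegral_const_mul' _ _ ofReal_ne_top]

lemma hardy_integrand_le {a q : ℝ} (ha : 0 < a) (hq : 1 ≤ q) {φ : ℝ → ℝ≥0∞} (hφ : Measurable φ)
    {t : ℝ} (ht : 0 < t) :
    (∫⁻ s in Ioo 0 t, ENNReal.ofReal (t ^ (-a)) * φ s * ENNReal.ofReal s⁻¹) ^ q *
        ENNReal.ofReal t⁻¹ ≤
      ENNReal.ofReal (1 / a) ^ (q - 1) * (ENNReal.ofReal (t ^ (-a - 1)) *
        ∫⁻ s in Ioo 0 t, φ s ^ q * ENNReal.ofReal (s ^ (a * (1 - q) - 1))) := by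
  have hq0 : 0 < q := one_pos.trans_le hq
  have hsplit : ∫⁻ s in Ioo 0 t, ENNReal.ofReal (t ^ (-a)) * φ s * ENNReal.ofReal s⁻¹ =
      ENNReal.ofReal (t ^ (-a)) *
        ∫⁻ s in Ioo 0 t, φ s * ENNReal.ofReal (s ^ (-a)) * ENNReal.ofReal (s ^ (a - 1)) := by
    rw [← lintegral_const_mul' _ _ ofReal_ne_top]
    refine setLIntegral_congr_fun measurableSet_Ioo fun s hs => ?_
    rw [mul_assoc, mul_assoc, ofReal_rpow_mul_ofReal_rpow hs.1,
      show -a + (a - 1) = -1 by ring, Real.rpow_neg_one]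
  have hmass : ∫⁻ s in Ioo 0 t, ENNReal.ofReal (s ^ (a - 1)) =
      ENNReal.ofReal (1 / a) * ENNReal.ofReal (t ^ a) := by
    rw [lintegral_Ioo_zero_rpow (by linarith) ht, sub_add_cancel, ← ofReal_mul (by positivity),
      one_div_mul_eq_div]
  have hpow : EqOn (fun s => (φ s * ENNReal.ofReal (s ^ (-a))) ^ q * ENNReal.ofReal (s ^ (a - 1)))
      (fun s => φ s ^ q * ENNReal.ofReal (s ^ (a * (1 - q) - 1))) (Ioo 0 t) := fun s hs => by
    simp only
    rw [mul_rpow_of_nonneg _ _ hq0.le, ofReal_rpow_rpow hs.1, mul_assoc,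
      ofReal_rpow_mul_ofReal_rpow hs.1]
    ring_nf
  have holder := lintegral_mul_rpow_le_of_one_le (μ := volume.restrict (Ioo 0 t))
    (f := fun s => φ s * ENNReal.ofReal (s ^ (-a))) (w := fun s => ENNReal.ofReal (s ^ (a - 1)))
    (by fun_prop) (by fun_prop) hq
  rw [setLIntegral_congr_fun measurableSet_Ioo hpow, hmass] at holder
  have ht_exp : ENNReal.ofReal (t ^ (-a * q)) * ENNReal.ofReal (t ^ (a * (q - 1))) *
      ENNReal.ofReal (t ^ (-1 : ℝ)) = ENNReal.ofReal (t ^ (-a - 1)) := by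
    rw [ofReal_rpow_mul_ofReal_rpow ht, ofReal_rpow_mul_ofReal_rpow ht]
    ring_nf
  rw [hsplit, mul_rpow_of_nonneg _ _ hq0.le]
  calc _ ≤ ENNReal.ofReal (t ^ (-a)) ^ q * ((∫⁻ s in Ioo 0 t,
          φ s ^ q * ENNReal.ofReal (s ^ (a * (1 - q) - 1))) *
          (ENNReal.ofReal (1 / a) * ENNReal.ofReal (t ^ a)) ^ (q - 1)) * ENNReal.ofReal t⁻¹ := by
        gcongr
    _ = _ := by
        rw [mul_rpow_of_nonneg _ _ (by linarith), ofReal_rpow_rpow ht, ofReal_rpow_rpow ht,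
          ← Real.rpow_neg_one, ← ht_exp]
        ring

/-- Hardy's inequality. For `p ∈ (0,∞)`, `q ∈ [1,∞)` and a nonnegative
measurable `φ` on `(0,∞)`,
`(∫₀^∞ [∫₀^t t^{-1/p} φ(s) ds/s]^q dt/t)^{1/q} ≤ p (∫₀^∞ [s^{-1/p} φ(s)]^q ds/s)^{1/q}`. -/
theorem hardy_inequality (p q : ℝ) (hp : 0 < p) (hq : 1 ≤ q)
    (φ : ℝ → ℝ≥0∞) (hφ : Measurable φ) :
    (∫⁻ t in Set.Ioi (0 : ℝ),
        (∫⁻ s in Set.Ioo (0 : ℝ) t,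
            ENNReal.ofReal (t ^ (-(1 / p))) * φ s * ENNReal.ofReal s⁻¹) ^ q *
          ENNReal.ofReal t⁻¹) ^ (1 / q) ≤
      ENNReal.ofReal p *
        (∫⁻ s in Set.Ioi (0 : ℝ),
            (ENNReal.ofReal (s ^ (-(1 / p))) * φ s) ^ q * ENNReal.ofReal s⁻¹) ^ (1 / q) := by
  have hq0 : 0 < q := one_pos.trans_le hq
  have ha : 0 < 1 / p := one_div_pos.2 hp
  have hrhs : EqOn (fun s => ENNReal.ofReal (s ^ (-(1 / p))) *
        (φ s ^ q * ENNReal.ofReal (s ^ (1 / p * (1 - q) - 1))))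
      (fun s => (ENNReal.ofReal (s ^ (-(1 / p))) * φ s) ^ q * ENNReal.ofReal s⁻¹) (Ioi 0) :=
    fun s hs => by
      simp only
      rw [mul_rpow_of_nonneg _ _ hq0.le, ofReal_rpow_rpow hs, ← Real.rpow_neg_one, mul_left_comm,
        mul_right_comm _ (φ s ^ q), ofReal_rpow_mul_ofReal_rpow hs, ofReal_rpow_mul_ofReal_rpow hs,
        mul_comm]
      ring_nf
  have hpow : ENNReal.ofReal p ^ (q - 1) * ENNReal.ofReal p = ENNReal.ofReal p ^ q := by
    conv_rhs => rw [← sub_add_cancel q 1, rpow_add_of_nonneg _ _ (by linarith) zero_le_one,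
      rpow_one]
  calc _ ≤ (∫⁻ t in Ioi 0, ENNReal.ofReal (1 / (1 / p)) ^ (q - 1) *
          (ENNReal.ofReal (t ^ (-(1 / p) - 1)) *
            ∫⁻ s in Ioo 0 t, φ s ^ q * ENNReal.ofReal (s ^ (1 / p * (1 - q) - 1)))) ^ (1 / q) :=
        rpow_le_rpow
          (setLIntegral_mono' measurableSet_Ioi fun _ ht => hardy_integrand_le ha hq hφ ht)
          (one_div_pos.2 hq0).le
    _ = _ := by
        rw [lintegral_const_mul' _ _ (rpow_ne_top_of_nonneg (by linarith) ofReal_ne_top),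
          lintegral_Ioi_rpow_mul_lintegral_Ioo ha (by fun_prop),
          setLIntegral_congr_fun measurableSet_Ioi hrhs, one_div_one_div, ← mul_assoc, hpow,
          mul_rpow_of_nonneg _ _ (one_div_pos.2 hq0).le, ← rpow_mul, mul_one_div_cancel hq0.ne',
          rpow_one]
end

section
/- In the Calderón–Zygmund decomposition at height α of f ∈ L¹(ℝⁿ), the good part g (equal to f off the cubes and to the cube averages on each cube Q_k) satisfies ‖g‖_{L^p}^p ≤ (1 + 2^{np}) α^{p−1} ‖f‖_{L¹} for p ∈ {1, 2}. -/
open MeasureTheory ENNReal Set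

/-!
Replacing `f` on a set by its average can only decrease `∫ |·|` over that set, and the cube
boundaries are Lebesgue-null (cubes are convex), so the disjoint open cubes carry all of `Ω`:
hence `‖g‖₁ ≤ ‖f‖₁`. Off `Ω` we have `|g| = |f| ≤ α` and on a cube `|g|` is at most the average
of `|f|`, so `‖g‖_∞ ≤ 2ⁿα`. Finally `∫ |g|^p ≤ ‖g‖_∞^(p-1) ‖g‖₁`.
-/

section Averaging

variable {X : Type*} [MeasurableSpace X] {μ : Measure X}

theorem lintegral_pow_le_of_ae_le {f : X → ℝ≥0∞} {M : ℝ≥0∞} (hM : M ≠ ∞)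
    (hf : ∀ᵐ x ∂μ, f x ≤ M) {p : ℕ} (hp : 1 ≤ p) :
    ∫⁻ x, f x ^ p ∂μ ≤ M ^ (p - 1) * ∫⁻ x, f x ∂μ :=
  calc ∫⁻ x, f x ^ p ∂μ ≤ ∫⁻ x, M ^ (p - 1) * f x ∂μ := by
        refine lintegral_mono_ae (hf.mono fun x hx => ?_)
        rw [← pow_sub_one_mul (by omega : p ≠ 0)]
        gcongr
    _ = M ^ (p - 1) * ∫⁻ x, f x ∂μ := lintegral_const_mul' _ _ (pow_ne_top hM)

variable {E : Type*} [NormedAddCommGroup E] [NormedSpace ℝ E]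

theorem enorm_setAverage_mul_measure_le (f : X → E) {s : Set X} (hs : μ s ≠ ∞) :
    ‖⨍ x in s, f x ∂μ‖ₑ * μ s ≤ ∫⁻ x in s, ‖f x‖ₑ ∂μ :=
  calc ‖⨍ x in s, f x ∂μ‖ₑ * μ s = ‖μ.real s • ⨍ x in s, f x ∂μ‖ₑ := by
        rw [enorm_smul, Real.enorm_of_nonneg measureReal_nonneg, measureReal_def, ofReal_toReal hs,
          mul_comm]
    _ = ‖∫ x in s, f x ∂μ‖ₑ := by rw [measure_smul_setAverage f hs]
    _ ≤ ∫⁻ x in s, ‖f x‖ₑ ∂μ := enorm_integral_le_lintegral_enorm f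

theorem lintegral_enorm_le_of_eq_setAverage {ι : Type*} [Countable ι] {s : ι → Set X}
    (hs : ∀ i, MeasurableSet (s i)) (hdisj : Pairwise (Function.onFun Disjoint s))
    (hfin : ∀ i, μ (s i) ≠ ∞) {f g : X → E}
    (hg_avg : ∀ i, ∀ x ∈ s i, g x = ⨍ y in s i, f y ∂μ)
    (hg_off : ∀ᵐ x ∂μ, x ∉ ⋃ i, s i → g x = f x) :
    ∫⁻ x, ‖g x‖ₑ ∂μ ≤ ∫⁻ x, ‖f x‖ₑ ∂μ := by
  have hU : MeasurableSet (⋃ i, s i) := .iUnion hs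
  rw [← lintegral_add_compl (fun x => ‖g x‖ₑ) hU, ← lintegral_add_compl (fun x => ‖f x‖ₑ) hU]
  refine add_le_add ?_ (setLIntegral_congr_fun_ae hU.compl ?_).le
  · rw [lintegral_iUnion hs hdisj, lintegral_iUnion hs hdisj]
    refine ENNReal.tsum_le_tsum fun i => ?_
    calc ∫⁻ x in s i, ‖g x‖ₑ ∂μ = ∫⁻ _ in s i, ‖⨍ y in s i, f y ∂μ‖ₑ ∂μ :=
          setLIntegral_congr_fun (hs i) fun x hx => by rw [hg_avg i x hx]
      _ = ‖⨍ y in s i, f y ∂μ‖ₑ * μ (s i) := setLIntegral_const _ _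
      _ ≤ ∫⁻ x in s i, ‖f x‖ₑ ∂μ := enorm_setAverage_mul_measure_le f (hfin i)
  · filter_upwards [hg_off] with x hx hxU
    rw [hx hxU]

end Averaging

section Cube

variable {ι : Type*} (c : ι → ℝ) (r : ℝ)

theorem setOf_abs_sub_le_eq_pi_Icc :
    {x : ι → ℝ | ∀ i, |x i - c i| ≤ r} = univ.pi fun i => Icc (c i - r) (c i + r) := by
  ext x
  simp only [mem_ofPred_eq, mem_univ_pi, mem_Icc, abs_sub_le_iff, tsub_le_iff_right, add_comm,
    and_comm]

variable [Fintype ι]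

theorem volume_frontier_setOf_abs_sub_le :
    volume (frontier {x : ι → ℝ | ∀ i, |x i - c i| ≤ r}) = 0 :=
  Convex.addHaar_frontier volume <|
    setOf_abs_sub_le_eq_pi_Icc c r ▸ convex_pi fun _ _ => convex_Icc _ _

theorem volume_setOf_abs_sub_le_ne_top : volume {x : ι → ℝ | ∀ i, |x i - c i| ≤ r} ≠ ∞ :=
  setOf_abs_sub_le_eq_pi_Icc c r ▸ (isCompact_univ_pi fun _ => isCompact_Icc).measure_lt_top.ne

end Cube

theorem cz_good_part_bound_general (n : ℕ) (f g : (Fin n → ℝ) → ℝ)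
    (hf : Integrable f) (α : ℝ) (hα : 0 < α)
    (c : ℕ → Fin n → ℝ) (r : ℕ → ℝ)
    (Q : ℕ → Set (Fin n → ℝ))
    (hQ : ∀ k, Q k = {x | ∀ i, |x i - c k i| ≤ r k})
    (hdisj : Pairwise (Function.onFun Disjoint fun k => interior (Q k)))
    (Ω : Set (Fin n → ℝ)) (hΩ : Ω = ⋃ k, Q k)
    (hsmall : ∀ᵐ x, x ∉ Ω → |f x| ≤ α)
    (havg : ∀ k,
      α < (volume (Q k)).toReal⁻¹ * ∫ x in Q k, |f x| ∧
        (volume (Q k)).toReal⁻¹ * (∫ x in Q k, |f x|) ≤ 2 ^ n * α)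
    (hg1 : ∀ x ∉ Ω, g x = f x)
    (hg2 : ∀ k, ∀ x ∈ interior (Q k),
      g x = (volume (Q k)).toReal⁻¹ * ∫ y in Q k, f y)
    (p : ℕ) (hp : p = 1 ∨ p = 2) :
    ∫⁻ x, ENNReal.ofReal (|g x| ^ p) ≤
      ENNReal.ofReal ((1 + 2 ^ (n * p)) * α ^ (p - 1) * ∫ x, |f x|) := by
  have hfront (k : ℕ) : volume (frontier (Q k)) = 0 :=
    hQ k ▸ volume_frontier_setOf_abs_sub_le (c k) (r k)
  have hfin (k : ℕ) : volume (interior (Q k)) ≠ ∞ :=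
    measure_ne_top_of_subset interior_subset (hQ k ▸ volume_setOf_abs_sub_le_ne_top (c k) (r k))
  have hΩ_ae : Ω =ᵐ[volume] ⋃ k, interior (Q k) := hΩ ▸
    (Filter.EventuallyEq.countable_iUnion fun k => interior_ae_eq_of_null_frontier (hfront k)).symm
  have hg_avg (k : ℕ) (x : Fin n → ℝ) (hx : x ∈ interior (Q k)) :
      g x = ⨍ y in interior (Q k), f y := by
    rw [hg2 k x hx, setAverage_congr (interior_ae_eq_of_null_frontier (hfront k)),
      setAverage_eq, smul_eq_mul, measureReal_def]
  have hL1 : ∫⁻ x, ‖g x‖ₑ ≤ ∫⁻ x, ‖f x‖ₑ :=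
    lintegral_enorm_le_of_eq_setAverage (fun k => isOpen_interior.measurableSet) hdisj hfin hg_avg
      (by filter_upwards [hΩ_ae.mem_iff] with x hx hxU using hg1 x (hx.not.mpr hxU))
  have havg_le (k : ℕ) : |(volume (Q k)).toReal⁻¹ * ∫ y in Q k, f y| ≤ 2 ^ n * α := by
    rw [abs_mul, abs_inv, abs_of_nonneg toReal_nonneg]
    exact (mul_le_mul_of_nonneg_left abs_integral_le_integral_abs (by positivity)).trans
      (havg k).2
  have hLinf : ∀ᵐ x, ‖g x‖ₑ ≤ ENNReal.ofReal (2 ^ n * α) := by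
    filter_upwards [hΩ_ae.mem_iff, hsmall] with x hxU hx_small
    rw [Real.enorm_eq_ofReal_abs]
    refine ofReal_le_ofReal ?_
    by_cases hxΩ : x ∈ Ω
    · obtain ⟨k, hk⟩ := mem_iUnion.1 (hxU.1 hxΩ)
      exact hg2 k x hk ▸ havg_le k
    · rw [hg1 x hxΩ]
      exact (hx_small hxΩ).trans (le_mul_of_one_le_left hα.le (one_le_pow₀ one_le_two))
  have hconst : (2 ^ n * α) ^ (p - 1) ≤ (1 + 2 ^ (n * p)) * α ^ (p - 1) := by
    rw [mul_pow, ← pow_mul]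
    gcongr
    calc (2 : ℝ) ^ (n * (p - 1)) ≤ 2 ^ (n * p) :=
          pow_le_pow_right₀ one_le_two (Nat.mul_le_mul_left n (Nat.sub_le p 1))
      _ ≤ 1 + 2 ^ (n * p) := le_add_of_nonneg_left zero_le_one
  calc ∫⁻ x, ENNReal.ofReal (|g x| ^ p) = ∫⁻ x, ‖g x‖ₑ ^ p := by
        simp_rw [Real.enorm_eq_ofReal_abs, ofReal_pow (abs_nonneg _)]
    _ ≤ ENNReal.ofReal (2 ^ n * α) ^ (p - 1) * ∫⁻ x, ‖f x‖ₑ :=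
        (lintegral_pow_le_of_ae_le ofReal_ne_top hLinf (by omega)).trans (by gcongr)
    _ = ENNReal.ofReal ((2 ^ n * α) ^ (p - 1) * ∫ x, |f x|) := by
        rw [← ofReal_integral_norm_eq_lintegral_enorm hf, ← ofReal_pow (by positivity),
          ← ofReal_mul (by positivity)]
        simp only [Real.norm_eq_abs]
    _ ≤ ENNReal.ofReal ((1 + 2 ^ (n * p)) * α ^ (p - 1) * ∫ x, |f x|) :=
        ofReal_le_ofReal <|
          mul_le_mul_of_nonneg_right hconst (integral_nonneg fun _ => abs_nonneg _)

/-- `L^p` bound (`p ∈ {1,2}`) for the good part of the Calderón–Zygmund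
decomposition at height `α`:  given closed cubes `Q k` with pairwise disjoint
interiors such that `|f| ≤ α` a.e. off `Ω = ⋃ Q k` and
`α < (1/|Q k|)∫_{Q k}|f| ≤ 2ⁿ α`, the function `g` equal to `f` off `Ω` and to the
average of `f` over `Q k` on the interior of each `Q k` satisfies
`‖g‖_{L^p}^p ≤ (1 + 2^{np}) α^{p-1} ‖f‖_{L¹}`. -/
theorem cz_good_part_bound (n : ℕ) (f g : (Fin n → ℝ) → ℝ)
    (hf : Integrable f) (hg : Measurable g) (α : ℝ) (hα : 0 < α)
    (c : ℕ → Fin n → ℝ) (r : ℕ → ℝ) (hr : ∀ k, 0 < r k)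
    (Q : ℕ → Set (Fin n → ℝ))
    (hQ : ∀ k, Q k = {x | ∀ i, |x i - c k i| ≤ r k})
    (hdisj : Pairwise (Function.onFun Disjoint fun k => interior (Q k)))
    (Ω : Set (Fin n → ℝ)) (hΩ : Ω = ⋃ k, Q k)
    (hsmall : ∀ᵐ x, x ∉ Ω → |f x| ≤ α)
    (havg : ∀ k,
      α < (volume (Q k)).toReal⁻¹ * ∫ x in Q k, |f x| ∧
        (volume (Q k)).toReal⁻¹ * (∫ x in Q k, |f x|) ≤ 2 ^ n * α)
    (hg1 : ∀ x ∉ Ω, g x = f x)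
    (hg2 : ∀ k, ∀ x ∈ interior (Q k),
      g x = (volume (Q k)).toReal⁻¹ * ∫ y in Q k, f y)
    (p : ℕ) (hp : p = 1 ∨ p = 2) :
    ∫⁻ x, ENNReal.ofReal (|g x| ^ p) ≤
      ENNReal.ofReal ((1 + 2 ^ (n * p)) * α ^ (p - 1) * ∫ x, |f x|) :=
  cz_good_part_bound_general n f g hf α hα c r Q hQ hdisj Ω hΩ hsmall havg hg1 hg2 p hp
end

section
/- Hörmander-type kernel estimate: for the vector kernel K(z) = (1/(π ω_{n-1})) z/|z|^{n+1} on ℝⁿ (n ≥ 2), there is a constant C_n such that for every y ∈ ℝⁿ \ {0}, ∫_{|x| ≥ 2|y|} |K(x − y) − K(x)| dx ≤ C_n. -/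
/-!
For `2|y| ≤ |x|` write `K(x - y) - K(x)` as `-|x-y|^{-n-1} y + (|x-y|^{-n-1} - |x|^{-n-1}) x`;
since `|x - y|` lies between `|x|/2` and `3|x|/2`, both terms are `O(|y| |x|^{-n-1})`.
The dilation `x ↦ 2|y| x` turns `∫_{|x| ≥ 2|y|} |x|^{-n-1} dx` into `(2|y|)⁻¹ ∫_{|x| ≥ 1} |x|^{-n-1} dx`,
which is finite because the exponent exceeds the dimension, and the factor `|y|` cancels.
-/

open MeasureTheory ENNReal Set

noncomputable section

/-- The Riesz kernel `K(z) = (1/(π ω_{n-1})) z/|z|^{n+1}` on `ℝⁿ`, where `ω_{n-1}` is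
the volume of the unit ball in `ℝ^{n-1}`. -/
def rieszKernel (n : ℕ) (z : EuclideanSpace ℝ (Fin n)) : EuclideanSpace ℝ (Fin n) :=
  (Real.pi * (volume (Metric.ball (0 : EuclideanSpace ℝ (Fin (n - 1))) 1)).toReal)⁻¹ •
    (‖z‖ ^ (n + 1))⁻¹ • z

section InversePower

lemma inv_le_two_div_of_half_le {s t : ℝ} (hs : 0 < s) (h : s / 2 ≤ t) : t⁻¹ ≤ 2 / s := by
  rw [← inv_div]
  exact inv_anti₀ (by positivity) h

lemma abs_inv_pow_sub_inv_pow_le {s t R : ℝ} (m : ℕ) (hs : 0 < s) (ht : s / 2 ≤ t)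
    (hR : |t - s| ≤ R) :
    |(t ^ m)⁻¹ - (s ^ m)⁻¹| ≤ m * 2 ^ m * R / s ^ (m + 1) := by
  have ht0 : 0 < t := by linarith
  have hR0 : 0 ≤ R := (abs_nonneg _).trans hR
  have hmax : max |t⁻¹| |s⁻¹| ≤ 2 / s := by
    rw [abs_of_pos (inv_pos.2 ht0), abs_of_pos (inv_pos.2 hs)]
    exact max_le (inv_le_two_div_of_half_le hs ht) (by rw [inv_eq_one_div]; gcongr; norm_num)
  have hdiff : |t⁻¹ - s⁻¹| ≤ 2 * R / s ^ 2 := by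
    rw [inv_sub_inv ht0.ne' hs.ne', abs_div, abs_of_pos (mul_pos ht0 hs), abs_sub_comm]
    calc |t - s| / (t * s) ≤ R / (s / 2 * s) := by gcongr
      _ = 2 * R / s ^ 2 := by field_simp
  calc |(t ^ m)⁻¹ - (s ^ m)⁻¹| = |t⁻¹ ^ m - s⁻¹ ^ m| := by rw [inv_pow, inv_pow]
    _ ≤ |t⁻¹ - s⁻¹| * m * max |t⁻¹| |s⁻¹| ^ (m - 1) := abs_pow_sub_pow_le ..
    _ ≤ 2 * R / s ^ 2 * m * (2 / s) ^ (m - 1) := by gcongr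
    _ = m * 2 ^ m * R / s ^ (m + 1) := by
      rcases m with _ | m
      · simp
      · rw [Nat.add_sub_cancel, div_pow]
        field_simp
        ring

variable {E : Type*} [SeminormedAddCommGroup E] [NormedSpace ℝ E]

lemma norm_inv_pow_smul_sub_le (m : ℕ) {x y : E} (h : 2 * ‖y‖ ≤ ‖x‖) :
    ‖(‖x - y‖ ^ m)⁻¹ • (x - y) - (‖x‖ ^ m)⁻¹ • x‖ ≤ (m + 1) * 2 ^ m * (‖y‖ / ‖x‖ ^ m) := by
  set t := ‖x - y‖
  set s := ‖x‖
  have htriangle : ‖(t ^ m)⁻¹ • (x - y) - (s ^ m)⁻¹ • x‖ ≤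
      (t ^ m)⁻¹ * ‖y‖ + |(t ^ m)⁻¹ - (s ^ m)⁻¹| * s := by
    calc _ = ‖-((t ^ m)⁻¹ • y) + ((t ^ m)⁻¹ - (s ^ m)⁻¹) • x‖ := by congr 1; module
      _ ≤ _ := by
        grw [norm_add_le, norm_neg, norm_smul, norm_smul, Real.norm_of_nonneg (by positivity),
          Real.norm_eq_abs]
  rcases (norm_nonneg x).eq_or_lt with hs | (hs : 0 < s)
  · have hy : ‖y‖ = 0 := le_antisymm (by linarith) (norm_nonneg y)
    simpa [s, ← hs, hy] using htriangle
  have ht : s / 2 ≤ t := by linarith [norm_sub_norm_le x y]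
  have hts : |t - s| ≤ ‖y‖ := by simpa using abs_norm_sub_norm_le (x - y) x
  have hA : (t ^ m)⁻¹ ≤ 2 ^ m / s ^ m := by
    rw [← inv_pow, ← div_pow]
    gcongr
    exact inv_le_two_div_of_half_le hs ht
  calc _ ≤ (t ^ m)⁻¹ * ‖y‖ + |(t ^ m)⁻¹ - (s ^ m)⁻¹| * s := htriangle
    _ ≤ 2 ^ m / s ^ m * ‖y‖ + m * 2 ^ m * ‖y‖ / s ^ (m + 1) * s := by
      gcongr
      exact abs_inv_pow_sub_inv_pow_le m hs ht hts
    _ = (m + 1) * 2 ^ m * (‖y‖ / s ^ m) := by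
      field_simp
      ring

end InversePower

section TailIntegral

variable {E : Type*} [NormedAddCommGroup E] [NormedSpace ℝ E] [MeasurableSpace E] [BorelSpace E]
  [FiniteDimensional ℝ E] (μ : Measure E) [μ.IsAddHaarMeasure]

lemma setLIntegral_one_le_norm_inv_pow_lt_top {k : ℕ} (hk : Module.finrank ℝ E < k) :
    ∫⁻ x in {x : E | 1 ≤ ‖x‖}, ENNReal.ofReal (‖x‖ ^ k)⁻¹ ∂μ < ∞ := by
  have hbound : ∀ x ∈ {x : E | 1 ≤ ‖x‖}, ENNReal.ofReal (‖x‖ ^ k)⁻¹ ≤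
      ENNReal.ofReal (2 ^ k) * ENNReal.ofReal ((1 + ‖x‖) ^ (-(k : ℝ))) := by
    intro x (hx : 1 ≤ ‖x‖)
    rw [← ENNReal.ofReal_mul (by positivity), Real.rpow_neg (by positivity), Real.rpow_natCast,
      ← div_eq_mul_inv, ← div_pow, ← inv_pow]
    gcongr
    exact inv_le_two_div_of_half_le (by positivity) (by linarith)
  calc _ ≤ ∫⁻ x in {x : E | 1 ≤ ‖x‖},
        ENNReal.ofReal (2 ^ k) * ENNReal.ofReal ((1 + ‖x‖) ^ (-(k : ℝ))) ∂μ :=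
        setLIntegral_mono' (measurableSet_le measurable_const measurable_norm) hbound
    _ ≤ ∫⁻ x, ENNReal.ofReal (2 ^ k) * ENNReal.ofReal ((1 + ‖x‖) ^ (-(k : ℝ))) ∂μ :=
        setLIntegral_le_lintegral _ _
    _ < ∞ := by
      rw [lintegral_const_mul' _ _ ENNReal.ofReal_ne_top]
      exact ENNReal.mul_lt_top ENNReal.ofReal_lt_top
        (finite_integral_one_add_norm (by exact_mod_cast hk))

lemma setLIntegral_le_norm_inv_pow_eq {k : ℕ} {r : ℝ} (hr : 0 < r) :
    ∫⁻ x in {x : E | r ≤ ‖x‖}, ENNReal.ofReal (‖x‖ ^ k)⁻¹ ∂μ =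
      ENNReal.ofReal (r ^ Module.finrank ℝ E / r ^ k) *
        ∫⁻ x in {x : E | 1 ≤ ‖x‖}, ENNReal.ofReal (‖x‖ ^ k)⁻¹ ∂μ := by
  set d := Module.finrank ℝ E
  have hpre : (r • · : E → E) ⁻¹' {x | r ≤ ‖x‖} = {x | 1 ≤ ‖x‖} := by
    ext x
    simp [norm_smul, abs_of_pos hr, hr]
  have hscale : ∀ x : E, ENNReal.ofReal (‖r • x‖ ^ k)⁻¹ =
      ENNReal.ofReal (r ^ k)⁻¹ * ENNReal.ofReal (‖x‖ ^ k)⁻¹ := by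
    intro x
    rw [← ENNReal.ofReal_mul (by positivity), norm_smul, Real.norm_of_nonneg hr.le, mul_pow,
      mul_inv]
  have hmap := setLIntegral_map (μ := μ) (f := fun x : E => ENNReal.ofReal (‖x‖ ^ k)⁻¹)
    (measurableSet_le (measurable_const (a := r)) measurable_norm) (by fun_prop)
    (measurable_const_smul r)
  rw [μ.map_addHaar_smul hr.ne', Measure.restrict_smul, lintegral_smul_measure, hpre,
    smul_eq_mul, abs_of_pos (by positivity)] at hmap
  simp only [hscale] at hmap
  rw [lintegral_const_mul' _ _ ENNReal.ofReal_ne_top] at hmap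
  calc _ = ENNReal.ofReal (r ^ d) *
        (ENNReal.ofReal (r ^ d)⁻¹ * ∫⁻ x in {x : E | r ≤ ‖x‖}, ENNReal.ofReal (‖x‖ ^ k)⁻¹ ∂μ) := by
        rw [← mul_assoc, ← ENNReal.ofReal_mul (by positivity), mul_inv_cancel₀ (by positivity),
          ENNReal.ofReal_one, one_mul]
    _ = _ := by rw [hmap, ← mul_assoc, ← ENNReal.ofReal_mul (by positivity), div_eq_mul_inv]

end TailIntegral

def rieszConst (n : ℕ) : ℝ :=
  (Real.pi * (volume (Metric.ball (0 : EuclideanSpace ℝ (Fin (n - 1))) 1)).toReal)⁻¹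

lemma rieszKernel_eq_smul (n : ℕ) (z : EuclideanSpace ℝ (Fin n)) :
    rieszKernel n z = rieszConst n • (‖z‖ ^ (n + 1))⁻¹ • z :=
  rfl

lemma norm_rieszKernel_sub_le {n : ℕ} {x y : EuclideanSpace ℝ (Fin n)} (h : 2 * ‖y‖ ≤ ‖x‖) :
    ‖rieszKernel n (x - y) - rieszKernel n x‖ ≤
      |rieszConst n| * (n + 2) * 2 ^ (n + 1) * (‖y‖ / ‖x‖ ^ (n + 1)) := by
  rw [rieszKernel_eq_smul, rieszKernel_eq_smul, ← smul_sub, norm_smul, Real.norm_eq_abs,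
    mul_assoc, mul_assoc]
  gcongr
  refine (norm_inv_pow_smul_sub_le (n + 1) h).trans_eq ?_
  push_cast
  ring

theorem riesz_kernel_hormander_general (n : ℕ) :
    ∃ C : ℝ, 0 < C ∧
      ∀ y : EuclideanSpace ℝ (Fin n), y ≠ 0 →
        ∫⁻ x in {x : EuclideanSpace ℝ (Fin n) | 2 * ‖y‖ ≤ ‖x‖},
            ENNReal.ofReal ‖rieszKernel n (x - y) - rieszKernel n x‖ ≤
          ENNReal.ofReal C := by
  set I := ∫⁻ x in {x : EuclideanSpace ℝ (Fin n) | 1 ≤ ‖x‖}, ENNReal.ofReal (‖x‖ ^ (n + 1))⁻¹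
  have hI : I ≠ ∞ := (setLIntegral_one_le_norm_inv_pow_lt_top volume (by simp)).ne
  set A := |rieszConst n| * (n + 2) * 2 ^ (n + 1)
  refine ⟨A / 2 * I.toReal + 1, by positivity, fun y hy => ?_⟩
  have hy' : 0 < 2 * ‖y‖ := by positivity
  calc _ ≤ ∫⁻ x in {x | 2 * ‖y‖ ≤ ‖x‖},
        ENNReal.ofReal (A * ‖y‖) * ENNReal.ofReal (‖x‖ ^ (n + 1))⁻¹ := by
        refine setLIntegral_mono' (measurableSet_le measurable_const measurable_norm) fun x hx => ?_
        rw [← ENNReal.ofReal_mul (by positivity)]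
        exact ENNReal.ofReal_le_ofReal ((norm_rieszKernel_sub_le hx).trans_eq (by ring))
    _ = ENNReal.ofReal (A * ‖y‖ * ((2 * ‖y‖) ^ n / (2 * ‖y‖) ^ (n + 1))) * I := by
        rw [lintegral_const_mul' _ _ ENNReal.ofReal_ne_top, setLIntegral_le_norm_inv_pow_eq volume hy',
          finrank_euclideanSpace_fin, ← mul_assoc, ← ENNReal.ofReal_mul (by positivity)]
    _ = ENNReal.ofReal (A / 2 * I.toReal) := by
        rw [ENNReal.ofReal_mul (p := A / 2) (by positivity), ENNReal.ofReal_toReal hI]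
        congr 2
        field_simp
        ring
    _ ≤ _ := ENNReal.ofReal_le_ofReal (by linarith)

/-- Hörmander-type kernel estimate: for `n ≥ 2` there is `C_n` such
that for every `y ≠ 0`, `∫_{|x| ≥ 2|y|} |K(x-y) - K(x)| dx ≤ C_n`. -/
theorem riesz_kernel_hormander (n : ℕ) (hn : 2 ≤ n) :
    ∃ C : ℝ, 0 < C ∧
      ∀ y : EuclideanSpace ℝ (Fin n), y ≠ 0 →
        ∫⁻ x in {x : EuclideanSpace ℝ (Fin n) | 2 * ‖y‖ ≤ ‖x‖},
            ENNReal.ofReal ‖rieszKernel n (x - y) - rieszKernel n x‖ ≤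
          ENNReal.ofReal C :=
  riesz_kernel_hormander_general n
end
end
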